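/- Let X1,...,Xm be i.i.d. Bernoulli(p) and p̂ = (1/m)∑Xi. Then with probability at least 1 − δ, p ≤ p̂ + sqrt(2·p̂·log(1/δ)/m) + 4·log(1/δ)/m. -/

import Mathlib

/-!
Chernoff's method for the lower tail. For `λ ≥ 0` a Bernoulli(`p`) variable satisfies
`E[e^{-λX}] = 1 - p + p e^{-λ} ≤ exp (p (e^{-λ} - 1)) ≤ exp (p (-λ + λ²/2))`, so Markov's
inequality with `λ = t / p` gives `P[p̂ ≤ p - t] ≤ exp (-m t² / (2p))`. For
`t = √(2 p log(1/δ) / m)` this is `δ`, and off that event `p ≤ p̂ + √(c p)` with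
`c = 2 log(1/δ) / m`. This forces `√p ≤ √p̂ + √c`, hence `p ≤ p̂ + √(c p̂) + c`.
-/

open MeasureTheory
open scoped ENNReal

set_option linter.deprecated false

/-- Empirical frequency of heads among `m` coin flips. -/
noncomputable def empFreq (m : ℕ) (ω : Fin m → Bool) : ℝ :=
  ((Finset.univ.filter fun i => ω i = true).card : ℝ) / m

open Real ProbabilityTheory
open scoped NNReal

lemma Real.exp_neg_le_one_sub_add_sq_div_two {x : ℝ} (hx : 0 ≤ x) :
    exp (-x) ≤ 1 - x + x ^ 2 / 2 := by
  have hcubic : 1 + x + x ^ 2 / 2 + x ^ 3 / 6 ≤ exp x := by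
    have := Real.sum_le_exp_of_nonneg hx 4
    norm_num [Finset.sum_range_succ, Nat.factorial] at this
    linarith
  rw [exp_neg, inv_le_iff_one_le_mul₀ (exp_pos x)]
  nlinarith [pow_nonneg hx 3, pow_nonneg hx 4, pow_nonneg hx 5]

lemma le_add_sqrt_mul_add_of_le_add_sqrt_mul {q a c : ℝ} (ha : 0 ≤ a) (hc : 0 ≤ c)
    (h : q ≤ a + √(c * q)) : q ≤ a + √(c * a) + c := by
  rcases lt_or_ge q 0 with hq | hq
  · linarith [sqrt_nonneg (c * a)]
  have hsqrt : √q ≤ √a + √c := by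
    nlinarith [sq_sqrt hq, sq_sqrt ha, sqrt_nonneg q, sqrt_nonneg a, sqrt_nonneg c,
      sqrt_mul hc q]
  have : √(c * q) ≤ √(c * a) + c := by
    rw [sqrt_mul hc, sqrt_mul hc]
    nlinarith [sqrt_nonneg c, mul_self_sqrt hc]
  linarith

lemma mgf_sum_pi {ι E : Type*} [Fintype ι] [MeasurableSpace E] (μ : Measure E) [SigmaFinite μ]
    (f : E → ℝ) (s : ℝ) :
    mgf (fun ω : ι → E => ∑ i, f (ω i)) (Measure.pi fun _ => μ) s
      = mgf f μ s ^ Fintype.card ι := by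
  simp only [mgf, Finset.mul_sum, exp_sum]
  exact integral_fintype_prod_eq_pow (fun x => exp (s * f x))

lemma PMF.integral_bernoulli {r : ℝ≥0} (hr : r ≤ 1) (f : Bool → ℝ) :
    ∫ b, f b ∂(PMF.bernoulli r hr).toMeasure = (1 - r) * f false + r * f true := by
  rw [PMF.integral_eq_sum]
  simp [PMF.bernoulli_apply, NNReal.coe_sub hr]
  ring

lemma mgf_bernoulli {r : ℝ≥0} (hr : r ≤ 1) (s : ℝ) :
    mgf (fun b : Bool => if b then (1 : ℝ) else 0) (PMF.bernoulli r hr).toMeasure s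
      = 1 - r + r * exp s := by
  simp [mgf, PMF.integral_bernoulli]

lemma one_sub_add_mul_exp_neg_le {r x : ℝ} (hr : 0 ≤ r) (hx : 0 ≤ x) :
    1 - r + r * exp (-x) ≤ exp (r * (-x + x ^ 2 / 2)) := by
  calc 1 - r + r * exp (-x) ≤ exp (r * (exp (-x) - 1)) := by
        linarith [add_one_le_exp (r * (exp (-x) - 1))]
    _ ≤ exp (r * (-x + x ^ 2 / 2)) := by
        gcongr
        linarith [exp_neg_le_one_sub_add_sq_div_two hx]

lemma measureReal_empFreq_le_sub_le {m : ℕ} (hm : 0 < m) {r : ℝ≥0} (hr : r ≤ 1) (hr0 : 0 < r)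
    {t : ℝ} (ht : 0 ≤ t) :
    (Measure.pi fun _ : Fin m => (PMF.bernoulli r hr).toMeasure).real {ω | empFreq m ω ≤ r - t}
      ≤ exp (-(m * t ^ 2 / (2 * r))) := by
  set μ := Measure.pi fun _ : Fin m => (PMF.bernoulli r hr).toMeasure
  set S : (Fin m → Bool) → ℝ := fun ω => (Finset.univ.filter fun i => ω i = true).card
  have hevent : {ω | empFreq m ω ≤ r - t} = {ω | S ω ≤ m * (r - t)} := by
    ext ω
    simp only [Set.mem_setOf_eq, empFreq, div_le_iff₀ (Nat.cast_pos.mpr hm : (0 : ℝ) < m), S,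
      mul_comm]
  set x := t / r
  have hx : 0 ≤ x := by positivity
  have hmgf : mgf S μ (-x) = (1 - r + r * exp (-x)) ^ m := by
    rw [← mgf_bernoulli hr]
    simpa using mgf_sum_pi (ι := Fin m) (PMF.bernoulli r hr).toMeasure
      (fun b : Bool => if b then (1 : ℝ) else 0) (-x)
  calc μ.real {ω | empFreq m ω ≤ r - t}
      ≤ exp (- -x * (m * (r - t))) * (1 - r + r * exp (-x)) ^ m := by
        rw [hevent, ← hmgf]
        exact measure_le_le_exp_mul_mgf _ (neg_nonpos.mpr hx) .of_finite
    _ ≤ exp (- -x * (m * (r - t))) * exp (r * (-x + x ^ 2 / 2)) ^ m := by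
        have hr' : (r : ℝ) ≤ 1 := hr
        gcongr
        exact one_sub_add_mul_exp_neg_le r.2 hx
    _ = exp (-(m * t ^ 2 / (2 * r))) := by
        rw [← exp_nat_mul, ← exp_add]
        congr 1
        simp only [x]
        field_simp
        ring

lemma le_add_sqrt_add_of_sub_sqrt_lt {q a L n : ℝ} (ha : 0 ≤ a) (hL : 0 ≤ L) (hn : 0 ≤ n)
    (h : q - √(2 * q * L / n) < a) : q ≤ a + √(2 * a * L / n) + 4 * L / n := by
  have hq : q ≤ a + √(2 * L / n * q) := by
    rw [show 2 * L / n * q = 2 * q * L / n by ring]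
    linarith
  have h2L : 2 * L / n ≤ 4 * L / n := by gcongr; norm_num
  have := le_add_sqrt_mul_add_of_le_add_sqrt_mul ha (by positivity) hq
  rw [show 2 * a * L / n = 2 * L / n * a by ring]
  linarith

lemma empFreq_nonneg (m : ℕ) (ω : Fin m → Bool) : 0 ≤ empFreq m ω := by
  unfold empFreq
  positivity

/-- Bernstein-type bound: for `m` i.i.d. Bernoulli(`p`) flips, with probability
at least `1 - δ`, `p ≤ p̂ + sqrt(2·p̂·log(1/δ)/m) + 4·log(1/δ)/m` where `p̂` is
the empirical frequency of heads. -/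
theorem bernstein_upper_bound
    (m : ℕ) (hm : 0 < m) (p : ℝ≥0∞) (hp1 : p ≤ 1)
    (δ : ℝ) (hδ : δ ∈ Set.Ioo (0 : ℝ) 1) :
    Measure.pi (fun _ : Fin m => (PMF.bernoulli p.toNNReal (by simpa using ENNReal.toNNReal_mono ENNReal.one_ne_top hp1)).toMeasure)
      {ω | p.toReal ≤ empFreq m ω
            + Real.sqrt (2 * empFreq m ω * Real.log (1 / δ) / m)
            + 4 * Real.log (1 / δ) / m}
      ≥ 1 - ENNReal.ofReal δ := by
  set q := p.toNNReal
  have hq1 : q ≤ 1 := by simpa using ENNReal.toNNReal_mono ENNReal.one_ne_top hp1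
  set μ := Measure.pi fun _ : Fin m => (PMF.bernoulli q hq1).toMeasure
  set L := log (1 / δ)
  have hL : 0 < L := log_pos (one_lt_one_div hδ.1 hδ.2)
  set G := {ω | (q : ℝ) ≤ empFreq m ω + √(2 * empFreq m ω * L / m) + 4 * L / m}
  suffices μ Gᶜ ≤ ENNReal.ofReal δ by
    show μ G ≥ _
    rw [← compl_compl G, prob_compl_eq_one_sub .of_discrete]
    exact tsub_le_tsub_left this 1
  rcases q.coe_nonneg.eq_or_lt with hq0 | hq0
  · have hG : G = Set.univ := Set.eq_univ_of_forall fun ω => by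
      have := empFreq_nonneg m ω
      simp only [G, Set.mem_setOf_eq, ← hq0]
      positivity
    simp [hG]
  set t := √(2 * q * L / m)
  have hGc : Gᶜ ⊆ {ω | empFreq m ω ≤ q - t} := fun ω hω => le_of_not_gt fun hlt =>
    hω (le_add_sqrt_add_of_sub_sqrt_lt (empFreq_nonneg m ω) hL.le m.cast_nonneg hlt)
  have hexponent : m * t ^ 2 / (2 * q) = L := by
    rw [sq_sqrt (by positivity)]
    field_simp
  calc μ Gᶜ ≤ μ {ω | empFreq m ω ≤ q - t} := measure_mono hGc
    _ = ENNReal.ofReal (μ.real {ω | empFreq m ω ≤ q - t}) :=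
        (ofReal_measureReal (measure_ne_top _ _)).symm
    _ ≤ ENNReal.ofReal (exp (-L)) := by
        gcongr
        simpa only [hexponent] using
          measureReal_empFreq_le_sub_le hm hq1 hq0 (t := t) (sqrt_nonneg _)
    _ = ENNReal.ofReal δ := by simp only [L, one_div, log_inv, neg_neg, exp_log hδ.1]
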